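/- arXiv:2104.05942 — 3 statements merged into one kernel-verified Lean document; each statement's English description precedes it below -/
import Mathlib

section
/- If a scalar function σ: ℝ → ℝ is slope-restricted in [0,1], i.e. 0 ≤ (σ(y)−σ(x))/(y−x) ≤ 1 for all x ≠ y, then for any vectors v, Δv ∈ ℝ^q (with σ applied elementwise), any diagonal matrix Λ with positive diagonal entries, and Δw := σ(v+Δv) − σ(v), the incremental quadratic constraint Δvᵀ Λ Δw + Δwᵀ Λ Δv − 2 Δwᵀ Λ Δw ≥ 0 holds. -/
open Matrix

/- Each coordinate contributes `2 λᵢ (Δvᵢ Δwᵢ - Δwᵢ²)`, and `Δwᵢ = s Δvᵢ` with a slope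
`s ∈ [0, 1]`, so `Δvᵢ Δwᵢ - Δwᵢ² = s (1 - s) Δvᵢ² ≥ 0`. -/

lemma sq_le_mul_of_div_mem_Icc {a d : ℝ} (hd : d ≠ 0) (h₀ : 0 ≤ a / d) (h₁ : a / d ≤ 1) :
    a ^ 2 ≤ a * d := by
  have key : a * d - a ^ 2 = a / d * (1 - a / d) * d ^ 2 := by field_simp
  have := mul_nonneg (mul_nonneg h₀ (sub_nonneg.mpr h₁)) (sq_nonneg d)
  linarith

lemma sq_sub_le_mul_sub_of_slope_mem_Icc {σ : ℝ → ℝ}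
    (hσ : ∀ x y : ℝ, x ≠ y → 0 ≤ (σ y - σ x) / (y - x) ∧ (σ y - σ x) / (y - x) ≤ 1)
    (x y : ℝ) : (σ y - σ x) ^ 2 ≤ (σ y - σ x) * (y - x) := by
  rcases eq_or_ne x y with rfl | hxy
  · simp
  · obtain ⟨h₀, h₁⟩ := hσ x y hxy
    exact sq_le_mul_of_div_mem_Icc (sub_ne_zero.mpr hxy.symm) h₀ h₁

lemma dotProduct_diagonal_mulVec {n : Type*} [Fintype n] [DecidableEq n] (lam x y : n → ℝ) :
    x ⬝ᵥ (diagonal lam *ᵥ y) = ∑ i, lam i * (x i * y i) := by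
  simp only [mulVec_diagonal, dotProduct]
  exact Finset.sum_congr rfl fun i _ => by ring

/-- incremental quadratic constraint for slope-restricted nonlinearities. -/
theorem slope_restricted_incremental_qc {q : ℕ} (σ : ℝ → ℝ)
    (hσ : ∀ x y : ℝ, x ≠ y → 0 ≤ (σ y - σ x) / (y - x) ∧ (σ y - σ x) / (y - x) ≤ 1)
    (v Δv : Fin q → ℝ) (lam : Fin q → ℝ) (hlam : ∀ i, 0 < lam i)
    (Λ : Matrix (Fin q) (Fin q) ℝ) (hΛ : Λ = Matrix.diagonal lam)
    (Δw : Fin q → ℝ) (hΔw : Δw = fun i => σ (v i + Δv i) - σ (v i)) :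
    0 ≤ Δv ⬝ᵥ (Λ *ᵥ Δw) + Δw ⬝ᵥ (Λ *ᵥ Δv) - 2 * (Δw ⬝ᵥ (Λ *ᵥ Δw)) := by
  subst hΛ
  have hcoord (i : Fin q) : Δw i ^ 2 ≤ Δw i * Δv i := by
    simpa [hΔw] using sq_sub_le_mul_sub_of_slope_mem_Icc hσ (v i) (v i + Δv i)
  have hsplit : Δv ⬝ᵥ (diagonal lam *ᵥ Δw) + Δw ⬝ᵥ (diagonal lam *ᵥ Δv)
      - 2 * (Δw ⬝ᵥ (diagonal lam *ᵥ Δw)) = ∑ i, 2 * lam i * (Δw i * Δv i - Δw i ^ 2) := by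
    simp only [dotProduct_diagonal_mulVec, Finset.mul_sum, ← Finset.sum_add_distrib,
      ← Finset.sum_sub_distrib]
    exact Finset.sum_congr rfl fun i _ => by ring
  rw [hsplit]
  exact Finset.sum_nonneg fun i _ =>
    mul_nonneg (mul_nonneg zero_le_two (hlam i).le) (sub_nonneg.mpr (hcoord i))
end

section
/- Let Q ∈ ℝ^{p×p} be symmetric negative definite, R ∈ ℝ^{m×m} symmetric, S ∈ ℝ^{m×p}, with R − S Q⁻¹ Sᵀ ≻ 0. Factor L_Qᵀ L_Q = −Q and L_Rᵀ L_R = R − S Q⁻¹ Sᵀ with L_Q, L_R invertible, and let Z ∈ ℝ^{p×m} satisfy I − Zᵀ Z ≻ 0. Then D := −Q⁻¹ Sᵀ + L_Q⁻¹ Z L_R satisfies R + S D + Dᵀ Sᵀ + Dᵀ Q D ≻ 0. -/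
/-!
Completing the square in `D` turns `R + S D + Dᵀ Sᵀ + Dᵀ Q D` into
`(R - S Q⁻¹ Sᵀ) + Eᵀ Q E` with `E = D + Q⁻¹ Sᵀ`. For the given `D` we have `E = L_Q⁻¹ Z L_R`,
and `Q = -L_Qᵀ L_Q` gives `Eᵀ Q E = -L_Rᵀ Zᵀ Z L_R`, so the whole expression is the congruence
`L_Rᵀ (1 - Zᵀ Z) L_R` of a positive definite matrix by an invertible one.
-/

open Matrix

namespace Matrix

variable {m n α : Type*} [Fintype n] [DecidableEq n] [CommRing α]

theorem complete_square_schur {Q : Matrix n n α}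
    (hQu : IsUnit Q) (hQ : Q.IsSymm) (R : Matrix m m α) (S : Matrix m n α)
    (D : Matrix n m α) :
    R + S * D + Dᵀ * Sᵀ + Dᵀ * Q * D =
      R - S * Q⁻¹ * Sᵀ + (D + Q⁻¹ * Sᵀ)ᵀ * Q * (D + Q⁻¹ * Sᵀ) := by
  have hQd : IsUnit Q.det := (isUnit_iff_isUnit_det Q).mp hQu
  have hQinv : (Q⁻¹)ᵀ = Q⁻¹ := by rw [transpose_nonsing_inv, hQ.eq]
  simp only [transpose_add, transpose_mul, transpose_transpose, hQinv, Matrix.add_mul,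
    Matrix.mul_add, Matrix.mul_assoc, mul_nonsing_inv_cancel_left Q _ hQd,
    nonsing_inv_mul_cancel_left Q _ hQd]
  abel

theorem transpose_mul_transpose_mul_self_mul_eq {A : Matrix n n α} (hA : IsUnit A)
    (W : Matrix n m α) : (A⁻¹ * W)ᵀ * (Aᵀ * A) * (A⁻¹ * W) = Wᵀ * W := by
  have hAd : IsUnit A.det := (isUnit_iff_isUnit_det A).mp hA
  have hAt : (A⁻¹)ᵀ * Aᵀ = 1 := by rw [← transpose_mul, mul_nonsing_inv A hAd, transpose_one]
  simp only [transpose_mul, Matrix.mul_assoc]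
  rw [← Matrix.mul_assoc (A⁻¹)ᵀ, hAt, Matrix.one_mul, mul_nonsing_inv_cancel_left A _ hAd]

end Matrix

theorem Matrix.PosDef.transpose_mul_mul_of_isUnit {n : Type*} [Fintype n] [DecidableEq n]
    {A B : Matrix n n ℝ} (hA : A.PosDef) (hB : IsUnit B) : (Bᵀ * A * B).PosDef := by
  simpa using hA.conjTranspose_mul_mul_same (mulVec_injective_iff_isUnit.mpr hB)

theorem D22_construction_general {p m : ℕ}
    (Q : Matrix (Fin p) (Fin p) ℝ) (R : Matrix (Fin m) (Fin m) ℝ)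
    (S : Matrix (Fin m) (Fin p) ℝ)
    (LQ : Matrix (Fin p) (Fin p) ℝ) (LR : Matrix (Fin m) (Fin m) ℝ)
    (hLQ : LQᵀ * LQ = -Q) (hLR : LRᵀ * LR = R - S * Q⁻¹ * Sᵀ)
    (hLQu : IsUnit LQ) (hLRu : IsUnit LR)
    (Z : Matrix (Fin p) (Fin m) ℝ) (hZ : (1 - Zᵀ * Z).PosDef)
    (D : Matrix (Fin p) (Fin m) ℝ)
    (hD : D = -(Q⁻¹ * Sᵀ) + LQ⁻¹ * Z * LR) :
    (R + S * D + Dᵀ * Sᵀ + Dᵀ * Q * D).PosDef := by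
  have hQ : Q = -(LQᵀ * LQ) := by rw [hLQ, neg_neg]
  have hQu : IsUnit Q := by
    rw [hQ]; exact (((isUnit_transpose LQ).mpr hLQu).mul hLQu).neg
  have hQs : Q.IsSymm := by rw [hQ, IsSymm, transpose_neg, transpose_mul, transpose_transpose]
  have hE : D + Q⁻¹ * Sᵀ = LQ⁻¹ * (Z * LR) := by rw [hD, Matrix.mul_assoc]; abel
  have hsquare : (D + Q⁻¹ * Sᵀ)ᵀ * Q * (D + Q⁻¹ * Sᵀ) = -(LRᵀ * (Zᵀ * Z) * LR) := by
    rw [hE, hQ, Matrix.mul_neg, Matrix.neg_mul,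
      transpose_mul_transpose_mul_self_mul_eq hLQu, transpose_mul, Matrix.mul_assoc,
      Matrix.mul_assoc, Matrix.mul_assoc]
  have hcongr : R + S * D + Dᵀ * Sᵀ + Dᵀ * Q * D = LRᵀ * (1 - Zᵀ * Z) * LR := by
    rw [complete_square_schur hQu hQs, hsquare, ← hLR,
      Matrix.mul_sub, Matrix.sub_mul, Matrix.mul_one, sub_eq_add_neg]
  exact hcongr ▸ hZ.transpose_mul_mul_of_isUnit hLRu

/-- construction of D₂₂ satisfying R + SD + DᵀSᵀ + DᵀQD ≻ 0. -/
theorem D22_construction {p m : ℕ}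
    (Q : Matrix (Fin p) (Fin p) ℝ) (R : Matrix (Fin m) (Fin m) ℝ)
    (S : Matrix (Fin m) (Fin p) ℝ)
    (hQ : (-Q).PosDef) (hR : R.IsSymm)
    (hRS : (R - S * Q⁻¹ * Sᵀ).PosDef)
    (LQ : Matrix (Fin p) (Fin p) ℝ) (LR : Matrix (Fin m) (Fin m) ℝ)
    (hLQ : LQᵀ * LQ = -Q) (hLR : LRᵀ * LR = R - S * Q⁻¹ * Sᵀ)
    (hLQu : IsUnit LQ) (hLRu : IsUnit LR)
    (Z : Matrix (Fin p) (Fin m) ℝ) (hZ : (1 - Zᵀ * Z).PosDef)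
    (D : Matrix (Fin p) (Fin m) ℝ)
    (hD : D = -(Q⁻¹ * Sᵀ) + LQ⁻¹ * Z * LR) :
    (R + S * D + Dᵀ * Sᵀ + Dᵀ * Q * D).PosDef :=
  D22_construction_general Q R S LQ LR hLQ hLR hLQu hLRu Z hZ D hD
end

section
/- The deep feedforward network as an equilibrium network: let W₀,…,W_L be weight matrices and b₀,…,b_L bias vectors of an L-layer network z₀ = u, z_{l+1} = σ(W_l z_l + b_l), y = W_L z_L + b_L, with σ elementwise. Define w = (z₁,…,z_L), the block strictly-lower-bidiagonal matrix D₁₁ with blocks W₁,…,W_{L−1} on the first subdiagonal, D₁₂ = (W₀; 0; …; 0), b_v = (b₀,…,b_{L−1}), D₂₁ = (0,…,0, W_L), b_y = b_L. Then w is the unique solution of the implicit equation w = σ(D₁₁ w + D₁₂ u + b_v), and the network output satisfies y = D₂₁ w + b_y. -/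
/-!
Index the stacked hidden state by `(layer, neuron) ∈ Fin L × Fin h`. The matrix `D₁₁` only
couples layer `k` to layer `k - 1`, so it is strictly block lower triangular and the `k`-th
block of the equilibrium map depends only on the blocks below `k`. Such a map has at most one
fixed point (forward substitution, i.e. strong induction on the layer), and unfolding the
block structure shows that the stacked layer outputs of the feedforward network are one.
-/

open Matrix

namespace Matrix

variable {L : ℕ} {ι κ l m R : Type*}

section Zero

variable [Zero R]

def blockSubdiag (A : ℕ → Matrix ι κ R) : Matrix (Fin L × ι) (Fin L × κ) R :=
  of fun kj k'j' => if kj.1.val = k'j'.1.val + 1 then A kj.1.val kj.2 k'j'.2 else 0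

def blockFirstCol (B : Matrix ι l R) : Matrix (Fin L × ι) l R :=
  of fun kj j => if kj.1.val = 0 then B kj.2 j else 0

def blockLastRow (C : Matrix m ι R) : Matrix m (Fin L × ι) R :=
  of fun i kj => if kj.1.val = L - 1 then C i kj.2 else 0

theorem blockSubdiag_eq_zero_of_le (A : ℕ → Matrix ι κ R) (kj : Fin L × ι) (k'j' : Fin L × κ)
    (h : kj.1 ≤ k'j'.1) : blockSubdiag A kj k'j' = 0 :=
  if_neg (by have := Fin.le_def.mp h; omega)

end Zero

variable [NonUnitalNonAssocSemiring R]

theorem mulVec_apply_congr_of_blockStrictLower [Fintype κ] {D : Matrix (Fin L × ι) (Fin L × κ) R}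
    (hD : ∀ kj k'j', kj.1 ≤ k'j'.1 → D kj k'j' = 0) {v v' : Fin L × κ → R} {k : Fin L}
    (hvv' : ∀ k' < k, ∀ j, v (k', j) = v' (k', j)) (j : ι) :
    (D *ᵥ v) (k, j) = (D *ᵥ v') (k, j) := by
  refine Finset.sum_congr rfl fun ⟨k', j'⟩ _ => ?_
  rcases lt_or_ge k' k with hk' | hk'
  · rw [hvv' k' hk' j']
  · simp [hD (k, j) (k', j') hk']

theorem blockSubdiag_mulVec_apply_of_val_eq_zero [Fintype κ] (A : ℕ → Matrix ι κ R)
    (v : Fin L × κ → R) {k : Fin L} (hk : k.val = 0) (j : ι) :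
    (blockSubdiag A *ᵥ v) (k, j) = 0 :=
  calc (blockSubdiag A *ᵥ v) (k, j) = (blockSubdiag A *ᵥ 0) (k, j) :=
        mulVec_apply_congr_of_blockStrictLower (blockSubdiag_eq_zero_of_le A)
          (fun k' hk' => absurd hk' (by simp [Fin.lt_def, hk])) j
    _ = 0 := by simp

theorem blockSubdiag_mulVec_apply_succ [Fintype κ] (A : ℕ → Matrix ι κ R) (v : Fin L × κ → R)
    {i : ℕ} (hi : i + 1 < L) (j : ι) :
    (blockSubdiag A *ᵥ v) (⟨i + 1, hi⟩, j) = (A (i + 1) *ᵥ fun j' => v (⟨i, by omega⟩, j')) j := by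
  simp only [mulVec, dotProduct, Fintype.sum_prod_type, blockSubdiag, of_apply, ite_mul,
    zero_mul, add_left_inj]
  rw [Finset.sum_eq_single (⟨i, by omega⟩ : Fin L)]
  · simp
  · intro k' _ hk'
    have : i ≠ k'.val := fun h => hk' (Fin.ext h.symm)
    simp [this]
  · simp

theorem blockFirstCol_mulVec_apply [Fintype l] (B : Matrix ι l R) (u : l → R) (k : Fin L)
    (j : ι) : (blockFirstCol B *ᵥ u) (k, j) = if k.val = 0 then (B *ᵥ u) j else 0 := by
  split_ifs with hk <;> simp [blockFirstCol, mulVec, dotProduct, hk]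

theorem blockLastRow_mulVec [Fintype ι] {n : ℕ} (C : Matrix m ι R) (v : Fin (n + 1) × ι → R) :
    blockLastRow C *ᵥ v = C *ᵥ fun j => v (Fin.last n, j) := by
  ext i
  simp only [mulVec, dotProduct, Fintype.sum_prod_type, blockLastRow, of_apply, ite_mul,
    zero_mul, add_tsub_cancel_right]
  rw [Finset.sum_eq_single (Fin.last n)]
  · simp
  · intro k' _ hk'
    have : k'.val ≠ n := fun h => hk' (Fin.ext h)
    simp [this]
  · simp

end Matrix

section Causal

variable {β ι α : Type*} [Preorder β]

def IsStrictlyCausal (F : (β × ι → α) → β × ι → α) : Prop :=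
  ∀ v v' k, (∀ k' < k, ∀ j, v (k', j) = v' (k', j)) → ∀ j, F v (k, j) = F v' (k, j)

theorem IsStrictlyCausal.eq_of_isFixedPt [WellFoundedLT β] {F : (β × ι → α) → β × ι → α}
    (hF : IsStrictlyCausal F) {v v' : β × ι → α} (hv : Function.IsFixedPt F v)
    (hv' : Function.IsFixedPt F v') : v = v' := by
  funext ⟨k, j⟩
  induction k using WellFoundedLT.induction generalizing j with
  | _ k ih => exact (congrFun hv _).symm.trans ((hF v v' k ih j).trans (congrFun hv' _))

end Causal

theorem isStrictlyCausal_comp_mulVec_of_blockStrictLower {L : ℕ} {ι R : Type*}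
    [NonUnitalNonAssocSemiring R] [Fintype ι] {D : Matrix (Fin L × ι) (Fin L × ι) R}
    (hD : ∀ kj k'j', kj.1 ≤ k'j'.1 → D kj k'j' = 0) (f : Fin L × ι → R → R) :
    IsStrictlyCausal fun v kj => f kj ((D *ᵥ v) kj) :=
  fun _ _ _ hvv' j => congrArg (f _) (mulVec_apply_congr_of_blockStrictLower hD hvv' j)

/-- an L-layer feedforward network is an equilibrium network whose
implicit equation has the stacked layer outputs as its unique solution. -/
theorem feedforward_as_equilibrium_network {L h m p : ℕ} (hL : 0 < L)
    (σ : ℝ → ℝ)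
    (W0 : Matrix (Fin h) (Fin m) ℝ)
    (Wh : ℕ → Matrix (Fin h) (Fin h) ℝ)
    (WL : Matrix (Fin p) (Fin h) ℝ)
    (b : ℕ → Fin h → ℝ) (bL : Fin p → ℝ)
    (u : Fin m → ℝ)
    (z : ℕ → Fin h → ℝ)
    (hz1 : z 1 = fun i => σ ((W0 *ᵥ u) i + b 0 i))
    (hzs : ∀ l : ℕ, 1 ≤ l → z (l + 1) = fun i => σ ((Wh l *ᵥ z l) i + b l i))
    (w : Fin L × Fin h → ℝ) (hw : w = fun kj => z (kj.1.val + 1) kj.2)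
    (D11 : Matrix (Fin L × Fin h) (Fin L × Fin h) ℝ)
    (hD11 : D11 = fun kj k'j' => if kj.1.val = k'j'.1.val + 1 then Wh kj.1.val kj.2 k'j'.2 else 0)
    (D12 : Matrix (Fin L × Fin h) (Fin m) ℝ)
    (hD12 : D12 = fun kj j => if kj.1.val = 0 then W0 kj.2 j else 0)
    (bv : Fin L × Fin h → ℝ) (hbv : bv = fun kj => b kj.1.val kj.2)
    (D21 : Matrix (Fin p) (Fin L × Fin h) ℝ)
    (hD21 : D21 = fun i kj => if kj.1.val = L - 1 then WL i kj.2 else 0) :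
    (w = fun kj => σ ((D11 *ᵥ w) kj + (D12 *ᵥ u) kj + bv kj)) ∧
    (∀ w' : Fin L × Fin h → ℝ,
      (w' = fun kj => σ ((D11 *ᵥ w') kj + (D12 *ᵥ u) kj + bv kj)) → w' = w) ∧
    (fun i => (WL *ᵥ z L) i + bL i) = (fun i => (D21 *ᵥ w) i + bL i) := by
  obtain ⟨n, rfl⟩ : ∃ n, L = n + 1 := ⟨L - 1, by omega⟩
  replace hD11 : D11 = blockSubdiag Wh := hD11
  replace hD12 : D12 = blockFirstCol W0 := hD12
  replace hD21 : D21 = blockLastRow WL := hD21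
  subst hw hD11 hD12 hbv hD21
  have hfix : ∀ kj : Fin (n + 1) × Fin h, z (kj.1.val + 1) kj.2 =
      σ ((blockSubdiag Wh *ᵥ fun kj => z (kj.1.val + 1) kj.2) kj +
        (blockFirstCol W0 *ᵥ u) kj + b kj.1.val kj.2) := by
    rintro ⟨⟨_ | i, hi⟩, j⟩
    · rw [blockSubdiag_mulVec_apply_of_val_eq_zero _ _ rfl, blockFirstCol_mulVec_apply, if_pos rfl,
        hz1, zero_add]
    · rw [blockSubdiag_mulVec_apply_succ, blockFirstCol_mulVec_apply, hzs (i + 1) (by omega)]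
      simp
  have hcausal : IsStrictlyCausal fun (v : Fin (n + 1) × Fin h → ℝ) kj =>
      σ ((blockSubdiag Wh *ᵥ v) kj + (blockFirstCol W0 *ᵥ u) kj + b kj.1.val kj.2) :=
    isStrictlyCausal_comp_mulVec_of_blockStrictLower (blockSubdiag_eq_zero_of_le Wh)
      fun kj x => σ (x + (blockFirstCol W0 *ᵥ u) kj + b kj.1.val kj.2)
  refine ⟨funext hfix, fun w' hw' => hcausal.eq_of_isFixedPt hw'.symm (funext hfix).symm, ?_⟩
  rw [blockLastRow_mulVec]
  rfl
end
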